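/- arXiv:2202.06364 — 9 statements merged into one kernel-verified Lean document; each statement's English description precedes it below -/
import Mathlib

section
/- Let n be a positive integer and let A be an n×n matrix with integer entries such that every complex root of the characteristic polynomial of A has absolute value 1. Then there exist positive integers ℓ and m such that (A^ℓ − I)^m = 0, where I is the n×n identity matrix. -/
/-!
The characteristic polynomial of `A` is monic with integer coefficients and all its complex roots
lie on the unit circle, so its Mahler measure is `1` and, by Kronecker's theorem, its roots are
roots of unity, of some common order `ℓ`. Splitting over `ℂ` with at most `n` roots, it divides
`(X ^ ℓ - 1) ^ n` over `ℂ`, hence over `ℤ` since it is monic, and Cayley–Hamilton gives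
`(A ^ ℓ - 1) ^ n = 0`.
-/

open Polynomial

theorem exists_pos_pow_eq_one_of_forall_isOfFinOrder {M : Type*} [Monoid M] (s : Finset M)
    (hs : ∀ x ∈ s, IsOfFinOrder x) : ∃ n, 0 < n ∧ ∀ x ∈ s, x ^ n = 1 :=
  ⟨∏ x ∈ s, orderOf x, Finset.prod_pos fun x hx ↦ (hs x hx).orderOf_pos,
    fun _ hx ↦ orderOf_dvd_iff_pow_eq_one.mp (Finset.dvd_prod_of_mem _ hx)⟩

theorem Polynomial.Monic.dvd_pow_natDegree_of_forall_isRoot {K : Type*} [Field K] {p q : K[X]}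
    (hp : p.Monic) (hsplit : p.Splits) (hq : ∀ z ∈ p.roots, q.IsRoot z) :
    p ∣ q ^ p.natDegree := by
  conv_lhs => rw [hsplit.eq_prod_roots_of_monic hp]
  calc (p.roots.map (X - C ·)).prod ∣ (p.roots.map fun _ ↦ q).prod :=
        Multiset.prod_dvd_prod_of_dvd _ _ fun z hz ↦ dvd_iff_isRoot.mpr (hq z hz)
    _ = q ^ p.roots.card := by rw [Multiset.map_const', Multiset.prod_replicate]
    _ ∣ q ^ p.natDegree := pow_dvd_pow _ p.card_roots'

theorem Polynomial.mahlerMeasure_eq_one_of_norm_roots_eq_one {p : ℂ[X]}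
    (hp : ‖p.leadingCoeff‖ = 1) (h : ∀ z ∈ p.roots, ‖z‖ = 1) : p.mahlerMeasure = 1 := by
  rw [mahlerMeasure_eq_leadingCoeff_mul_prod_roots, hp, one_mul]
  exact Multiset.prod_eq_one fun x hx ↦ by
    obtain ⟨z, hz, rfl⟩ := Multiset.mem_map.mp hx
    simp [h z hz]

theorem Polynomial.Monic.exists_pow_eq_one_of_norm_aroots_eq_one {p : ℤ[X]} (hp : p.Monic)
    (h : ∀ z ∈ p.aroots ℂ, ‖z‖ = 1) : ∃ ℓ, 0 < ℓ ∧ ∀ z ∈ p.aroots ℂ, z ^ ℓ = 1 := by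
  have hmahler : (p.map (Int.castRingHom ℂ)).mahlerMeasure = 1 :=
    mahlerMeasure_eq_one_of_norm_roots_eq_one (by simp [hp.map]) h
  obtain ⟨ℓ, hℓ, hpow⟩ := exists_pos_pow_eq_one_of_forall_isOfFinOrder (p.aroots ℂ).toFinset
    fun z hz ↦ isOfFinOrder_iff_pow_eq_one.mpr <| by
      have hz := Multiset.mem_toFinset.mp hz
      exact pow_eq_one_of_mahlerMeasure_eq_one hmahler (norm_ne_zero_iff.mp (by simp [h z hz])) hz
  exact ⟨ℓ, hℓ, fun z hz ↦ hpow z (Multiset.mem_toFinset.mpr hz)⟩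

/-- An integer matrix all of whose complex eigenvalues have absolute value 1
satisfies `(A^ℓ - I)^m = 0` for some positive integers `ℓ`, `m`. -/
theorem stmt_1 (n : ℕ) (hn : 0 < n) (A : Matrix (Fin n) (Fin n) ℤ)
    (h : ∀ z : ℂ, Polynomial.aeval z A.charpoly = 0 → ‖z‖ = 1) :
    ∃ ℓ m : ℕ, 0 < ℓ ∧ 0 < m ∧ (A ^ ℓ - 1) ^ m = 0 := by
  have hmonic := A.charpoly_monic
  obtain ⟨ℓ, hℓ, hroots⟩ :=
    hmonic.exists_pow_eq_one_of_norm_aroots_eq_one fun z hz ↦ h z (mem_aroots.mp hz).2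
  have hdvd : A.charpoly ∣ (X ^ ℓ - 1) ^ n := by
    rw [← map_dvd_map (algebraMap ℤ ℂ) (algebraMap ℤ ℂ).injective_int hmonic]
    simpa [hmonic.natDegree_map, A.charpoly_natDegree_eq_dim] using
      (hmonic.map (algebraMap ℤ ℂ)).dvd_pow_natDegree_of_forall_isRoot (IsAlgClosed.splits _)
        (q := X ^ ℓ - 1) fun z hz ↦ by simp [hroots z hz]
  obtain ⟨q, hq⟩ := hdvd
  refine ⟨ℓ, n, hℓ, hn, ?_⟩
  simpa [A.aeval_self_charpoly] using congrArg (aeval A) hq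
end

section
/- Let M be an additive abelian group, let Ψ : M → M be a group endomorphism, and let P be a monic polynomial with integer coefficients such that every complex root of P is a root of unity. If P(Ψ) = 0 (evaluating P at Ψ in the ring of group endomorphisms of M, with the constant term acting as multiplication by that integer), then there exist positive integers ℓ and m such that (Ψ^ℓ − id_M)^m = 0. -/
/-!
The complex roots of `P` are finitely many roots of unity, so they all satisfy `z ^ ℓ = 1` for a
common `ℓ > 0`. Since `P` splits over `ℂ` into linear factors `X - z`, each dividing `X ^ ℓ - 1`,
`P` divides `(X ^ ℓ - 1) ^ deg P` over `ℂ`, hence over `ℤ` because `P` is monic. Evaluating this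
divisibility at `Ψ` gives the claim.
-/

open Polynomial

theorem Finset.exists_pos_pow_eq_one {G : Type*} [Monoid G] (s : Finset G)
    (hs : ∀ g ∈ s, IsOfFinOrder g) : ∃ n : ℕ, 0 < n ∧ ∀ g ∈ s, g ^ n = 1 := by
  refine ⟨∏ g ∈ s, orderOf g, Finset.prod_pos fun g hg => (hs g hg).orderOf_pos, ?_⟩
  intro g hg
  exact orderOf_dvd_iff_pow_eq_one.mp (Finset.dvd_prod_of_mem _ hg)

namespace Polynomial

theorem Splits.dvd_pow_natDegree_of_forall_isRoot {K : Type*} [Field K] {Q : K[X]}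
    (hQ : Q.Splits) (hmonic : Q.Monic) {S : K[X]} (hS : ∀ z ∈ Q.roots, S.IsRoot z) :
    Q ∣ S ^ Q.natDegree := by
  have hprod : (Q.roots.map fun z => X - C z).prod ∣ S ^ Multiset.card Q.roots := by
    simpa using Multiset.prod_dvd_prod_of_dvd (S := Q.roots) (fun z => X - C z) (fun _ => S)
      fun z hz => dvd_iff_isRoot.mpr (hS z hz)
  calc Q = (Q.roots.map fun z => X - C z).prod := hQ.eq_prod_roots_of_monic hmonic
    _ ∣ S ^ Multiset.card Q.roots := hprod
    _ ∣ S ^ Q.natDegree := pow_dvd_pow S (card_roots' Q)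

theorem Monic.exists_dvd_X_pow_sub_one_pow {R K : Type*} [CommRing R] [Field K]
    [IsAlgClosed K] [Algebra R K] (hinj : Function.Injective (algebraMap R K)) {P : R[X]}
    (hP : P.Monic) (hroots : ∀ z : K, aeval z P = 0 → ∃ k : ℕ, 0 < k ∧ z ^ k = 1) :
    ∃ ℓ : ℕ, 0 < ℓ ∧ P ∣ (X ^ ℓ - 1) ^ P.natDegree := by
  classical
  set Q := P.map (algebraMap R K)
  have hfin : ∀ z ∈ Q.roots.toFinset, IsOfFinOrder z := fun z hz =>
    isOfFinOrder_iff_pow_eq_one.mpr <| hroots z <| by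
      rw [aeval_def, ← eval_map]
      exact isRoot_of_mem_roots (Multiset.mem_toFinset.mp hz)
  obtain ⟨ℓ, hℓ, hpow⟩ := Q.roots.toFinset.exists_pos_pow_eq_one hfin
  refine ⟨ℓ, hℓ, ?_⟩
  have hQ : Q ∣ (X ^ ℓ - 1) ^ Q.natDegree :=
    (IsAlgClosed.splits Q).dvd_pow_natDegree_of_forall_isRoot (hP.map _) fun z hz => by
      simp [hpow z (Multiset.mem_toFinset.mpr hz)]
  rw [hP.natDegree_map] at hQ
  rwa [← map_dvd_map _ hinj hP, Polynomial.map_pow, Polynomial.map_sub,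
    Polynomial.map_pow, map_X, Polynomial.map_one]

end Polynomial

/-- If a group endomorphism `Ψ` of an abelian group is killed by a monic integer
polynomial all of whose complex roots are roots of unity, then `(Ψ^ℓ - id)^m = 0`
for some positive integers `ℓ`, `m`. -/
theorem stmt_2 (M : Type*) [AddCommGroup M] (Ψ : AddMonoid.End M)
    (P : Polynomial ℤ) (hP : P.Monic)
    (hroots : ∀ z : ℂ, Polynomial.aeval z P = 0 → ∃ k : ℕ, 0 < k ∧ z ^ k = 1)
    (hPΨ : Polynomial.aeval Ψ P = 0) :
    ∃ ℓ m : ℕ, 0 < ℓ ∧ 0 < m ∧ (Ψ ^ ℓ - 1) ^ m = 0 := by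
  obtain ⟨ℓ, hℓ, hdvd⟩ := hP.exists_dvd_X_pow_sub_one_pow (algebraMap ℤ ℂ).injective_int hroots
  -- `P.natDegree` itself may be `0` (for `P = 1`), but the exponent must be positive.
  refine ⟨ℓ, P.natDegree + 1, hℓ, P.natDegree.succ_pos, ?_⟩
  have := aeval_eq_zero_of_dvd_aeval_eq_zero (hdvd.trans (pow_dvd_pow _ P.natDegree.le_succ)) hPΨ
  simpa using this
end

section
/- Let M be a divisible additive abelian group, let Ψ : M → M be a group endomorphism, and let f, g be polynomials with integer coefficients whose images in ℚ[X] are coprime (i.e., generate the unit ideal of ℚ[X]). Then every element of M can be written as the sum of an element of the image of the endomorphism f(Ψ) and an element of the image of the endomorphism g(Ψ). -/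
/-- For a divisible abelian group `M`, an endomorphism `Ψ`, and integer polynomials
`f`, `g` that are coprime over `ℚ`, every element of `M` is a sum of an element of
the image of `f(Ψ)` and an element of the image of `g(Ψ)`. -/
theorem stmt_3 (M : Type*) [AddCommGroup M]
    (hdiv : ∀ (x : M) (n : ℕ), 0 < n → ∃ y : M, n • y = x)
    (Ψ : AddMonoid.End M) (f g : Polynomial ℤ)
    (hcop : IsCoprime (f.map (Int.castRingHom ℚ)) (g.map (Int.castRingHom ℚ))) :
    ∀ x : M, ∃ a ∈ Set.range ⇑(Polynomial.aeval Ψ f),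
      ∃ b ∈ Set.range ⇑(Polynomial.aeval Ψ g), x = a + b := by
  obtain ⟨a, b, hab⟩ := hcop
  obtain ⟨c, hA⟩ := IsLocalization.integerNormalization_map_to_map (nonZeroDivisors ℤ) a
  obtain ⟨d, hB⟩ := IsLocalization.integerNormalization_map_to_map (nonZeroDivisors ℤ) b
  set A := IsLocalization.integerNormalization (nonZeroDivisors ℤ) a with hAdef
  set B := IsLocalization.integerNormalization (nonZeroDivisors ℤ) b with hBdef
  have hn : (c : ℤ) * (d : ℤ) ≠ 0 :=
    mul_ne_zero (nonZeroDivisors.coe_ne_zero c) (nonZeroDivisors.coe_ne_zero d)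
  have key : f * (A * Polynomial.C (d : ℤ)) + g * (B * Polynomial.C (c : ℤ))
      = Polynomial.C ((c : ℤ) * (d : ℤ)) := by
    apply Polynomial.map_injective (Int.castRingHom ℚ) Int.cast_injective
    have halg : (Int.castRingHom ℚ) = algebraMap ℤ ℚ := rfl
    simp only [Polynomial.map_add, Polynomial.map_mul, Polynomial.map_C, halg, hA, hB,
      zsmul_eq_mul, Polynomial.C_eq_intCast, eq_intCast, Int.cast_mul, Polynomial.map_intCast]
    rw [halg] at hab
    linear_combination ((c : ℤ) : Polynomial ℚ) * ((d : ℤ) : Polynomial ℚ) * hab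
  intro x
  set n : ℤ := (c : ℤ) * (d : ℤ) with hndef
  obtain ⟨y, hy⟩ := hdiv x n.natAbs (Int.natAbs_pos.mpr hn)
  have hz : ∃ z : M, n • z = x := by
    rcases Int.natAbs_eq n with h | h
    · exact ⟨y, by rw [h, natCast_zsmul, hy]⟩
    · exact ⟨-y, by rw [h, neg_zsmul, natCast_zsmul, smul_neg, neg_neg, hy]⟩
  obtain ⟨z, hz⟩ := hz
  refine ⟨(Polynomial.aeval Ψ f) ((Polynomial.aeval Ψ (A * Polynomial.C (d : ℤ))) z),
    ⟨_, rfl⟩, (Polynomial.aeval Ψ g) ((Polynomial.aeval Ψ (B * Polynomial.C (c : ℤ))) z),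
    ⟨_, rfl⟩, ?_⟩
  have h1 : x = (Polynomial.aeval Ψ (Polynomial.C n)) z := by
    rw [Polynomial.aeval_C, algebraMap_int_eq, eq_intCast, AddMonoid.End.intCast_apply, hz]
  rw [h1, ← key]; simp only [map_add, map_mul]
  rfl
end

section
/- Let M be an additive abelian group, let Ψ : M → M be a group endomorphism, and let f, g be polynomials with integer coefficients whose images in ℚ[X] are coprime. Assume that (f·g)(Ψ) = 0 as an endomorphism of M, and that for every positive integer n the n-torsion subgroup {x ∈ M : n·x = 0} is finite. Then the intersection of the image of the endomorphism f(Ψ) with the image of the endomorphism g(Ψ) is a finite set. -/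
open Polynomial

/-- Every rational polynomial can be cleared of denominators. -/
lemma exists_int_den (p : ℚ[X]) :
    ∃ (n : ℤ) (q : ℤ[X]), n ≠ 0 ∧ q.map (Int.castRingHom ℚ) = (n : ℚ[X]) * p := by
  obtain ⟨b, hb⟩ := IsLocalization.integerNormalization_map_to_map
    (nonZeroDivisors ℤ) p
  refine ⟨(b : ℤ), IsLocalization.integerNormalization (nonZeroDivisors ℤ) p,
    nonZeroDivisors.coe_ne_zero b, ?_⟩
  have h : algebraMap ℤ ℚ = Int.castRingHom ℚ := rfl
  rw [← h, hb, zsmul_eq_mul]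

/-- If `Ψ` is killed by `f * g` with `f`, `g` coprime over `ℚ`, and all `n`-torsion
subgroups of `M` are finite, then the images of `f(Ψ)` and `g(Ψ)` have finite
intersection. -/
theorem stmt_4 (M : Type*) [AddCommGroup M] (Ψ : AddMonoid.End M)
    (f g : Polynomial ℤ)
    (hcop : IsCoprime (f.map (Int.castRingHom ℚ)) (g.map (Int.castRingHom ℚ)))
    (hfg : Polynomial.aeval Ψ (f * g) = 0)
    (htors : ∀ n : ℕ, 0 < n → {x : M | n • x = 0}.Finite) :
    (Set.range ⇑(Polynomial.aeval Ψ f) ∩ Set.range ⇑(Polynomial.aeval Ψ g)).Finite := by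
  obtain ⟨u, v, huv⟩ := hcop
  obtain ⟨n₁, A, hn₁, hA⟩ := exists_int_den u
  obtain ⟨n₂, B, hn₂, hB⟩ := exists_int_den v
  have hinj : Function.Injective (Polynomial.map (Int.castRingHom ℚ)) :=
    Polynomial.map_injective _ (fun a b h => by simpa using h)
  have key : C n₂ * A * f + C n₁ * B * g = C (n₁ * n₂) := by
    apply hinj
    simp only [Polynomial.map_add, Polynomial.map_mul, Polynomial.map_C, Polynomial.map_intCast, eq_intCast, hA, hB]
    push_cast
    linear_combination ((n₁ : ℚ[X]) * (n₂ : ℚ[X])) * huv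
  have cast_apply : ∀ (n : ℤ) (m : M), (algebraMap ℤ (AddMonoid.End M) n) m = n • m := by
    intro n m
    rw [algebraMap_int_eq, eq_intCast, AddMonoid.End.intCast_apply]
  apply Set.Finite.subset (htors (n₁ * n₂).natAbs
    (Int.natAbs_pos.mpr (mul_ne_zero hn₁ hn₂)))
  rintro x ⟨⟨y, hy⟩, z, hz⟩
  have h1 : (Polynomial.aeval Ψ f) x = 0 := by
    rw [← hz]
    show ((Polynomial.aeval Ψ f) * (Polynomial.aeval Ψ g)) z = 0
    rw [← map_mul, hfg]; rfl
  have h2 : (Polynomial.aeval Ψ g) x = 0 := by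
    rw [← hy]
    show ((Polynomial.aeval Ψ g) * (Polynomial.aeval Ψ f)) y = 0
    rw [← map_mul, mul_comm g f, hfg]; rfl
  have hx : ((n₁ * n₂ : ℤ)) • x = 0 := by
    have h := congrArg (fun p => (Polynomial.aeval Ψ p) x) key
    simp only [map_add, map_mul, Polynomial.aeval_C, AddMonoidHom.add_apply] at h
    have hL : ((algebraMap ℤ (AddMonoid.End M)) n₂ * (Polynomial.aeval Ψ) A *
        (Polynomial.aeval Ψ) f + (algebraMap ℤ (AddMonoid.End M)) n₁ *
        (Polynomial.aeval Ψ) B * (Polynomial.aeval Ψ) g) x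
        = (algebraMap ℤ (AddMonoid.End M)) n₂ ((Polynomial.aeval Ψ A) ((Polynomial.aeval Ψ f) x))
          + (algebraMap ℤ (AddMonoid.End M)) n₁
            ((Polynomial.aeval Ψ B) ((Polynomial.aeval Ψ g) x)) := rfl
    rw [hL, h1, h2, map_zero, map_zero, map_zero, map_zero, add_zero, ← map_mul,
      cast_apply] at h
    exact h.symm
  show ((n₁ * n₂).natAbs) • x = 0
  rcases Int.natAbs_eq (n₁ * n₂) with h | h
  · rw [← natCast_zsmul, ← h, hx]
  · rw [← natCast_zsmul, ← neg_eq_zero, ← neg_zsmul, ← h, hx]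
end

section
/- Let M be an additive abelian group and let Φ : M → M be a group endomorphism whose kernel is finite, of cardinality k. Let x ∈ M be an element of finite additive order n with gcd(n, k) = 1, and assume the n-torsion subgroup {y ∈ M : n·y = 0} is finite. Then x is periodic under Φ, i.e., there exists a positive integer m with Φ^m(x) = x. -/
/-- A torsion point whose (finite) order is coprime to the size of the (finite) kernel
of an endomorphism `Φ`, with finite `n`-torsion, is `Φ`-periodic. -/
theorem stmt_5 (M : Type*) [AddCommGroup M] (Φ : AddMonoid.End M) (k : ℕ)
    (hker : {y : M | Φ y = 0}.Finite) (hk : {y : M | Φ y = 0}.ncard = k)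
    (x : M) (n : ℕ) (hn : 0 < n) (hord : addOrderOf x = n)
    (hgcd : Nat.gcd n k = 1)
    (htors : {y : M | n • y = 0}.Finite) :
    ∃ m : ℕ, 0 < m ∧ (Φ ^ m) x = x := by
  classical
  -- kernel as an additive subgroup
  set K : AddSubgroup M :=
    { carrier := {y : M | Φ y = 0}
      add_mem' := fun {a b} ha hb => by simp [Set.mem_setOf_eq] at *; simp [map_add, ha, hb]
      zero_mem' := by simp
      neg_mem' := fun {a} ha => by simp [Set.mem_setOf_eq] at *; simp [ha] } with hK
  haveI : Finite K := hker.to_subtype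
  have hcardK : Nat.card K = k := by
    rw [← hk]
    exact (Nat.card_coe_set_eq _).symm
  -- every kernel element is killed by k
  have hkerkill : ∀ y : M, Φ y = 0 → k • y = 0 := by
    intro y hy
    have : k • (⟨y, hy⟩ : K) = 0 := by
      rw [← hcardK]
      exact card_nsmul_eq_zero'
    exact Subtype.ext_iff.mp this
  -- key injectivity on n-torsion
  have hzero : ∀ y : M, n • y = 0 → Φ y = 0 → y = 0 := by
    intro y hny hΦy
    have h1 : addOrderOf y ∣ n := addOrderOf_dvd_of_nsmul_eq_zero hny
    have h2 : addOrderOf y ∣ k := addOrderOf_dvd_of_nsmul_eq_zero (hkerkill y hΦy)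
    have : addOrderOf y ∣ 1 := hgcd ▸ Nat.dvd_gcd h1 h2
    exact AddMonoid.addOrderOf_eq_one_iff.mp (Nat.dvd_one.mp this)
  -- the n-torsion set
  set T : Set M := {y : M | n • y = 0} with hT
  haveI : Finite T := htors.to_subtype
  have hmaps : ∀ y : M, y ∈ T → Φ y ∈ T := by
    intro y hy
    simp only [hT, Set.mem_setOf_eq] at *
    rw [← map_nsmul, hy, map_zero]
  let f : T → T := fun y => ⟨Φ y, hmaps y y.2⟩
  have hinj : Function.Injective f := by
    intro a b hab
    have h1 : Φ ((a : M) - b) = 0 := by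
      have := Subtype.ext_iff.mp hab
      simp only [f] at this
      simp [map_sub, this]
    have h2 : n • ((a : M) - b) = 0 := by
      have ha := a.2; have hb := b.2
      simp only [hT, Set.mem_setOf_eq] at ha hb
      rw [smul_sub, ha, hb, sub_zero]
    have := hzero _ h2 h1
    exact Subtype.ext (sub_eq_zero.mp this)
  let e : Equiv.Perm T := Equiv.ofBijective f (Finite.injective_iff_bijective.mp hinj)
  have hpow : ∀ (m : ℕ) (y : T), ((e ^ m) y : M) = (Φ ^ m) (y : M) := by
    intro m
    induction m with
    | zero => intro y; simp
    | succ m ih =>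
      intro y
      rw [pow_succ, pow_succ, Equiv.Perm.mul_apply]
      have : ((e y : T) : M) = Φ (y : M) := rfl
      rw [ih (e y), this]
      rfl
  have hx : x ∈ T := by
    simp only [hT, Set.mem_setOf_eq]
    rw [← hord]
    exact addOrderOf_nsmul_eq_zero x
  refine ⟨orderOf e, ?_, ?_⟩
  · exact orderOf_pos e
  · have := hpow (orderOf e) ⟨x, hx⟩
    rw [pow_orderOf_eq_one] at this
    simpa using this.symm
end

section
/- Let N be a positive integer and let A be an N×N integer matrix with nonzero determinant. Define Φ : (ℂˣ)^N → (ℂˣ)^N by letting the i-th coordinate of Φ(x) be ∏_j x_j^{A_{ij}} (integer exponents). Then the set of Φ-periodic points (points x with Φ^m(x) = x for some positive integer m) is Zariski dense: the only polynomial in N variables over ℂ vanishing at every Φ-periodic point is the zero polynomial. -/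
open MvPolynomial

lemma zpow_sum' {G : Type*} [CommGroup G] {ι : Type*} (a : G) (s : Finset ι) (g : ι → ℤ) :
    a ^ (∑ i ∈ s, g i) = ∏ i ∈ s, a ^ g i := by
  classical
  induction s using Finset.cons_induction with
  | empty => simp
  | cons i s hi ih => rw [Finset.sum_cons, Finset.prod_cons, zpow_add, ih]

/-- Iteration formula for the monomial map. -/
lemma iter_formula {N : ℕ} (A : Matrix (Fin N) (Fin N) ℤ)
    (Φ : (Fin N → ℂˣ) → (Fin N → ℂˣ))
    (hΦ : ∀ (x : Fin N → ℂˣ) (i : Fin N), Φ x i = ∏ j, x j ^ A i j) :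
    ∀ (m : ℕ) (x : Fin N → ℂˣ) (i : Fin N), Φ^[m] x i = ∏ j, x j ^ ((A ^ m) i j) := by
  intro m
  induction m with
  | zero =>
    intro x i
    simp [Matrix.one_apply, pow_zero]
  | succ m ih =>
    intro x i
    rw [Function.iterate_succ_apply', hΦ]
    calc ∏ j, (Φ^[m] x) j ^ A i j
        = ∏ j, (∏ k, x k ^ ((A ^ m) j k)) ^ A i j := by
          refine Finset.prod_congr rfl fun j _ => by rw [ih]
      _ = ∏ j, ∏ k, x k ^ ((A ^ m) j k * A i j) := by
          refine Finset.prod_congr rfl fun j _ => by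
            rw [← Finset.prod_zpow]
            exact Finset.prod_congr rfl fun k _ => by rw [zpow_mul]
      _ = ∏ k, ∏ j, x k ^ ((A ^ m) j k * A i j) := Finset.prod_comm
      _ = ∏ k, x k ^ ((A ^ (m + 1)) i k) := by
          refine Finset.prod_congr rfl fun k _ => ?_
          rw [← zpow_sum' (x k) Finset.univ fun j => (A ^ m) j k * A i j]
          congr 1
          rw [pow_succ']
          simp [Matrix.mul_apply, mul_comm]

/-- Finite order of an integer matrix mod q. -/
lemma exists_pow_cong (N q : ℕ) [NeZero q] (A : Matrix (Fin N) (Fin N) ℤ)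
    (h : IsUnit ((A.det : ZMod q))) :
    ∃ m : ℕ, 0 < m ∧ ∀ i j, (q : ℤ) ∣ (A ^ m) i j - (1 : Matrix (Fin N) (Fin N) ℤ) i j := by
  classical
  set φ : ℤ →+* ZMod q := Int.castRingHom (ZMod q)
  set B : Matrix (Fin N) (Fin N) (ZMod q) := A.map φ with hB
  have hdet : IsUnit B.det := by
    have hBdet : B.det = φ A.det := by rw [RingHom.map_det φ A, RingHom.mapMatrix_apply]
    rw [hBdet]; exact h
  have hub : IsUnit B := (Matrix.isUnit_iff_isUnit_det B).mpr hdet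
  obtain ⟨u, hu⟩ := hub
  refine ⟨Fintype.card (Matrix (Fin N) (Fin N) (ZMod q))ˣ, Fintype.card_pos, ?_⟩
  have hpow : B ^ Fintype.card (Matrix (Fin N) (Fin N) (ZMod q))ˣ = 1 := by
    rw [← hu, ← Units.val_pow_eq_pow_val, pow_card_eq_one, Units.val_one]
  intro i j
  have hmap : (A ^ Fintype.card (Matrix (Fin N) (Fin N) (ZMod q))ˣ).map φ
      = (1 : Matrix (Fin N) (Fin N) ℤ).map φ := by
    rw [← RingHom.mapMatrix_apply, ← RingHom.mapMatrix_apply, map_pow, map_one,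
      RingHom.mapMatrix_apply, ← hB]
    exact hpow
  have := congrFun (congrFun hmap i) j
  simp only [Matrix.map_apply] at this
  have : ((((A ^ Fintype.card (Matrix (Fin N) (Fin N) (ZMod q))ˣ) i j
      - (1 : Matrix (Fin N) (Fin N) ℤ) i j : ℤ)) : ZMod q) = 0 := by
    push_cast
    rw [sub_eq_zero]
    exact this
  exact (ZMod.intCast_zmod_eq_zero_iff_dvd _ q).mp this

/-- A polynomial vanishing on an infinite grid is zero. -/
lemma grid_zero : ∀ (n : ℕ) (T : Set ℂ), T.Infinite → ∀ (f : MvPolynomial (Fin n) ℂ),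
    (∀ x : Fin n → ℂ, (∀ i, x i ∈ T) → MvPolynomial.eval x f = 0) → f = 0 := by
  intro n
  induction n with
  | zero =>
    intro T hT f hf
    obtain ⟨c, rfl⟩ := MvPolynomial.C_surjective (Fin 0) f
    have := hf (fun i => i.elim0) (fun i => i.elim0)
    rw [MvPolynomial.eval_C] at this
    rw [this, map_zero]
  | succ n ih =>
    intro T hT f hf
    have key : ∀ k, (MvPolynomial.finSuccEquiv ℂ n f).coeff k = 0 := by
      intro k
      refine ih T hT _ ?_
      intro y hy
      set p := Polynomial.map (MvPolynomial.eval y) (MvPolynomial.finSuccEquiv ℂ n f) with hp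
      have hroot : ∀ t ∈ T, p.eval t = 0 := by
        intro t ht
        rw [hp, ← MvPolynomial.eval_eq_eval_mv_eval']
        refine hf (Fin.cons t y) ?_
        intro i
        refine Fin.cases ?_ ?_ i
        · simpa using ht
        · intro j; simpa using hy j
      have hp0 : p = 0 := by
        refine Polynomial.eq_zero_of_infinite_isRoot p (hT.mono ?_)
        intro t ht
        exact hroot t ht
      have := congrArg (fun q => Polynomial.coeff q k) hp0
      simpa [hp, Polynomial.coeff_map] using this
    have h0 : MvPolynomial.finSuccEquiv ℂ n f = 0 := Polynomial.ext fun k => by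
      rw [key k, Polynomial.coeff_zero]
    have h0' : (MvPolynomial.finSuccEquiv ℂ n) f = (MvPolynomial.finSuccEquiv ℂ n) 0 := by
      rw [h0, map_zero]
    exact (MvPolynomial.finSuccEquiv ℂ n).injective h0'

/-- The periodic points of a dominant monomial self-map of the torus `(ℂˣ)^N`
are Zariski dense. -/
theorem stmt_6 (N : ℕ) (hN : 0 < N) (A : Matrix (Fin N) (Fin N) ℤ) (hA : A.det ≠ 0)
    (Φ : (Fin N → ℂˣ) → (Fin N → ℂˣ))
    (hΦ : ∀ (x : Fin N → ℂˣ) (i : Fin N), Φ x i = ∏ j, x j ^ A i j)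
    (f : MvPolynomial (Fin N) ℂ)
    (hf : ∀ x : Fin N → ℂˣ, (∃ m : ℕ, 0 < m ∧ Φ^[m] x = x) →
      MvPolynomial.eval (fun i => (x i : ℂ)) f = 0) :
    f = 0 := by
  classical
  set d : ℕ := A.det.natAbs with hd
  have hd0 : 0 < d := Int.natAbs_pos.mpr hA
  obtain ⟨p, hpd, hp⟩ := Nat.exists_infinite_primes (d + 1)
  have hpnd : ¬ p ∣ d := fun hdvd => absurd (Nat.le_of_dvd hd0 hdvd) (by omega)
  -- The infinite set of p-power roots of unity.
  set T : Set ℂ := {z : ℂ | ∃ k : ℕ, z ^ (p ^ k) = 1} with hT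
  have hTinf : T.Infinite := by
    have hinj : Function.Injective (fun k : ℕ => Complex.exp (2 * Real.pi * Complex.I / (p ^ k : ℕ))) := by
      intro a b hab
      dsimp only at hab
      have ha := Complex.isPrimitiveRoot_exp (p ^ a) (pow_ne_zero a hp.ne_zero)
      have hb := Complex.isPrimitiveRoot_exp (p ^ b) (pow_ne_zero b hp.ne_zero)
      rw [hab] at ha
      have := ha.unique hb
      exact Nat.pow_right_injective hp.two_le this
    refine Set.infinite_of_injective_forall_mem hinj ?_
    intro k
    exact ⟨k, (Complex.isPrimitiveRoot_exp (p ^ k) (pow_ne_zero k hp.ne_zero)).pow_eq_one⟩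
  refine grid_zero N T hTinf f ?_
  intro x hx
  choose κ hκ using hx
  set K : ℕ := Finset.univ.sup κ with hK
  set q : ℕ := p ^ K with hq
  have hq0 : 0 < q := pow_pos hp.pos K
  have hxq : ∀ i, x i ^ q = 1 := by
    intro i
    obtain ⟨c, hc⟩ := pow_dvd_pow p (Finset.le_sup (Finset.mem_univ i) : κ i ≤ K)
    rw [hq, hc, pow_mul, hκ i, one_pow]
  have hxne : ∀ i, x i ≠ 0 := by
    intro i h0
    have := hxq i
    rw [h0, zero_pow hq0.ne'] at this
    exact one_ne_zero this.symm
  set u : Fin N → ℂˣ := fun i => Units.mk0 (x i) (hxne i) with hu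
  have huq : ∀ i, u i ^ q = 1 := by
    intro i
    ext
    push_cast
    exact hxq i
  -- coprimality and unit determinant mod q
  have hcop : Nat.Coprime d q := by
    refine Nat.Coprime.pow_right K ?_
    exact ((Nat.Prime.coprime_iff_not_dvd hp).mpr hpnd).symm
  haveI : NeZero q := ⟨hq0.ne'⟩
  have hdet : IsUnit ((A.det : ZMod q)) := by
    have hdu : IsUnit ((d : ℕ) : ZMod q) := (ZMod.isUnit_iff_coprime d q).mpr hcop
    rcases Int.natAbs_eq A.det with h | h
    · rw [h, Int.cast_natCast]; exact hdu
    · rw [h, Int.cast_neg, Int.cast_natCast]; exact hdu.neg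
  obtain ⟨m, hm, hdvd⟩ := exists_pow_cong N q A hdet
  have hper : Φ^[m] u = u := by
    funext i
    rw [iter_formula A Φ hΦ m u i]
    have : ∀ j, u j ^ ((A ^ m) i j) = u j ^ ((1 : Matrix (Fin N) (Fin N) ℤ) i j) := by
      intro j
      obtain ⟨c, hc⟩ := hdvd i j
      have : (A ^ m) i j = (1 : Matrix (Fin N) (Fin N) ℤ) i j + (q : ℤ) * c := by omega
      rw [this, zpow_add, zpow_mul, zpow_natCast, huq j, one_zpow, mul_one]
    rw [Finset.prod_congr rfl fun j _ => this j]
    have := iter_formula A Φ hΦ 0 u i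
    rw [Function.iterate_zero_apply, pow_zero] at this
    exact this.symm
  exact hf u ⟨m, hm, hper⟩
end

section
/- Every polynomial f in two variables over ℂ satisfying f(2^n, 3^n) = 0 for every natural number n is the zero polynomial; that is, the set {(2^n, 3^n) : n ∈ ℕ} is Zariski dense in ℂ². -/
lemma nat23_inj {a b c d : ℕ} (h : 2^a*3^b = 2^c*3^d) : a = c ∧ b = d := by
  constructor
  · have := congrArg (fun n => n.factorization 2) h
    simpa [Nat.factorization_mul, Nat.Prime.factorization_pow, Nat.prime_two,
      Nat.prime_three, Finsupp.single_apply, pow_ne_zero] using this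
  · have := congrArg (fun n => n.factorization 3) h
    simpa [Nat.factorization_mul, Nat.Prime.factorization_pow, Nat.prime_two,
      Nat.prime_three, Finsupp.single_apply, pow_ne_zero] using this

/-- The set `{(2^n, 3^n) : n ∈ ℕ}` is Zariski dense in `ℂ²`. -/
theorem stmt_11 (f : MvPolynomial (Fin 2) ℂ)
    (hf : ∀ n : ℕ, MvPolynomial.eval ![(2 : ℂ) ^ n, (3 : ℂ) ^ n] f = 0) :
    f = 0 := by
  have inj : Function.Injective (fun d : Fin 2 →₀ ℕ => (2:ℂ)^(d 0) * 3^(d 1)) := by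
    intro d e h
    simp only at h
    have h2 : ((2^(d 0)*3^(d 1) : ℕ) : ℂ) = ((2^(e 0)*3^(e 1) : ℕ) : ℂ) := by
      push_cast; exact h
    have hN := Nat.cast_injective h2
    obtain ⟨h0, h1⟩ := nat23_inj hN
    ext i
    fin_cases i <;> assumption
  have inj2 : Function.Injective
      (fun d : Fin 2 →₀ ℕ => powersHom ℂ ((2:ℂ)^(d 0) * 3^(d 1))) := by
    intro d e h
    apply inj
    have := congrArg (fun φ : Multiplicative ℕ →* ℂ => φ (Multiplicative.ofAdd 1)) h
    simpa using this
  have li : LinearIndependent ℂ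
      (fun d : Fin 2 →₀ ℕ => ⇑(powersHom ℂ ((2:ℂ)^(d 0) * 3^(d 1)))) :=
    (linearIndependent_monoidHom (Multiplicative ℕ) ℂ).comp _ inj2
  rw [linearIndependent_iff'] at li
  have key : ∀ d ∈ f.support, MvPolynomial.coeff d f = 0 := by
    refine li f.support (fun d => MvPolynomial.coeff d f) ?_
    funext m
    have hn := hf (Multiplicative.toAdd m)
    rw [MvPolynomial.eval_eq'] at hn
    simp only [Finset.sum_apply, Pi.smul_apply, smul_eq_mul, powersHom_apply, Pi.zero_apply]
    rw [← hn]
    apply Finset.sum_congr rfl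
    intro d _
    rw [Fin.prod_univ_two]
    simp only [Matrix.cons_val_zero, Matrix.cons_val_one, Matrix.head_cons]
    rw [mul_pow, ← pow_mul, ← pow_mul, ← pow_mul, ← pow_mul]
    ring_nf
  ext d
  by_cases hd : d ∈ f.support
  · simpa using key d hd
  · simpa using MvPolynomial.notMem_support_iff.mp hd
end

section
/- Let ψ : ℂ² → ℂ² be the map ψ(x, y) = (2x, 3y). If Z ⊆ ℂ² is the set of common zeros of some set of polynomials in two variables over ℂ, satisfies ψ(Z) ⊆ Z, and Z ≠ ℂ², then Z is contained in the union of the two coordinate axes, i.e., every (x, y) ∈ Z satisfies x·y = 0. -/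
lemma expsum' {α : Type*} [DecidableEq α] (l : α → ℂ) : ∀ (T : Finset α), Set.InjOn l T →
    ∀ (c : α → ℂ), (∀ n : ℕ, ∑ d ∈ T, c d * l d ^ n = 0) → ∀ d ∈ T, c d = 0 := by
  intro T
  induction T using Finset.induction_on with
  | empty => simp
  | @insert a s ha ih =>
    intro hinj c hc
    have hsub : (s : Set α) ⊆ ((insert a s : Finset α) : Set α) := by
      intro z hz; simp only [Finset.coe_insert, Set.mem_insert_iff]
      right; exact hz
    have key : ∀ d ∈ s, c d * (l d - l a) = 0 := by
      apply ih (hinj.mono hsub) (fun d => c d * (l d - l a))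
      intro n
      have h1 := hc (n + 1)
      have h0 := hc n
      have expand : ∑ d ∈ s, (c d * (l d - l a)) * l d ^ n
          = ∑ d ∈ insert a s, (c d * l d ^ (n+1) - l a * (c d * l d ^ n)) := by
        rw [Finset.sum_insert ha]
        have hz : c a * l a ^ (n+1) - l a * (c a * l a ^ n) = 0 := by ring
        rw [hz, zero_add]
        apply Finset.sum_congr rfl
        intro d hd; ring
      rw [expand, Finset.sum_sub_distrib, ← Finset.mul_sum, h1, h0, mul_zero, sub_zero]
    intro d hd
    rcases Finset.mem_insert.mp hd with rfl | hds
    · have h0 := hc 0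
      simp only [pow_zero, mul_one] at h0
      rw [Finset.sum_insert ha] at h0
      have hz : ∑ d' ∈ s, c d' = 0 := by
        apply Finset.sum_eq_zero
        intro d' hd'
        have hne : l d' ≠ l d := by
          intro h
          exact ha (by rwa [hinj (hsub hd') (Finset.mem_insert_self d s) h] at hd')
        rcases mul_eq_zero.mp (key d' hd') with h | h
        · exact h
        · exact absurd (sub_eq_zero.mp h) hne
      rw [hz, add_zero] at h0; exact h0
    · have hne : l d ≠ l a := by
        intro h
        exact ha (by rwa [hinj (hsub hds) (Finset.mem_insert_self a s) h] at hds)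
      rcases mul_eq_zero.mp (key d hds) with h | h
      · exact h
      · exact absurd (sub_eq_zero.mp h) hne

lemma twothree' (i j i' j' : ℕ) (h : 2 ^ i * 3 ^ j = 2 ^ i' * 3 ^ j') : i = i' ∧ j = j' := by
  have h2 := congrArg (fun n => n.factorization 2) h
  have h3 := congrArg (fun n => n.factorization 3) h
  simp [Nat.factorization_mul (by norm_num : (2:ℕ)^i ≠ 0) (by norm_num : (3:ℕ)^j ≠ 0),
    Nat.factorization_mul (by norm_num : (2:ℕ)^i' ≠ 0) (by norm_num : (3:ℕ)^j' ≠ 0),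
    Nat.factorization_pow, Nat.Prime.factorization (by norm_num : Nat.Prime 2),
    Nat.Prime.factorization (by norm_num : Nat.Prime 3), Finsupp.single_apply] at h2 h3
  exact ⟨h2, h3⟩

/-- Every proper Zariski closed subset of `ℂ²` invariant under `(x, y) ↦ (2x, 3y)`
is contained in the union of the two coordinate axes. -/
theorem stmt_12 (ψ : (Fin 2 → ℂ) → (Fin 2 → ℂ))
    (hψ : ∀ x : Fin 2 → ℂ, ψ x = ![2 * x 0, 3 * x 1])
    (Z : Set (Fin 2 → ℂ))
    (hZcl : ∃ S : Set (MvPolynomial (Fin 2) ℂ),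
      Z = {x : Fin 2 → ℂ | ∀ f ∈ S, MvPolynomial.eval x f = 0})
    (hinv : ψ '' Z ⊆ Z)
    (hne : Z ≠ Set.univ) :
    ∀ x ∈ Z, x 0 * x 1 = 0 := by
  obtain ⟨S, hS⟩ := hZcl
  intro x hx
  by_contra hxy
  have ha : x 0 ≠ 0 := fun h => hxy (by rw [h, zero_mul])
  have hb : x 1 ≠ 0 := fun h => hxy (by rw [h, mul_zero])
  -- orbit
  set pt : ℕ → (Fin 2 → ℂ) := fun n => ![2 ^ n * x 0, 3 ^ n * x 1] with hpt
  have hmem : ∀ n, pt n ∈ Z := by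
    intro n
    induction n with
    | zero =>
      have : pt 0 = x := by
        funext i; fin_cases i <;> simp [hpt]
      rwa [this]
    | succ n ih =>
      have h1 : ψ (pt n) ∈ Z := hinv ⟨pt n, ih, rfl⟩
      have h2 : ψ (pt n) = pt (n + 1) := by
        rw [hψ]
        funext i; fin_cases i <;> (simp [hpt]; ring)
      rwa [h2] at h1
  -- every f in S vanishes on the orbit
  have hvanish : ∀ f ∈ S, ∀ n : ℕ, MvPolynomial.eval (pt n) f = 0 := by
    intro f hf n
    have := hmem n
    rw [hS] at this
    exact this f hf
  -- hence every f in S is zero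
  have hzero : ∀ f ∈ S, f = 0 := by
    intro f hf
    by_contra hf0
    set l : (Fin 2 →₀ ℕ) → ℂ := fun d => (2:ℂ) ^ d 0 * (3:ℂ) ^ d 1 with hl
    have hlinj : Function.Injective l := by
      intro d d' h
      have hcast : ((2 ^ d 0 * 3 ^ d 1 : ℕ) : ℂ) = ((2 ^ d' 0 * 3 ^ d' 1 : ℕ) : ℂ) := by
        push_cast; exact h
      have hnat := Nat.cast_injective hcast
      obtain ⟨h0, h1⟩ := twothree' _ _ _ _ hnat
      ext i
      fin_cases i
      · exact h0
      · exact h1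
    set c : (Fin 2 →₀ ℕ) → ℂ :=
      fun d => MvPolynomial.coeff d f * x 0 ^ d 0 * x 1 ^ d 1 with hc
    have hsum : ∀ n : ℕ, ∑ d ∈ f.support, c d * l d ^ n = 0 := by
      intro n
      have hev := hvanish f hf n
      rw [MvPolynomial.eval_eq'] at hev
      rw [← hev]
      apply Finset.sum_congr rfl
      intro d hd
      have hprod : ∏ i : Fin 2, pt n i ^ d i = (2 ^ n * x 0) ^ d 0 * (3 ^ n * x 1) ^ d 1 := by
        rw [Fin.prod_univ_two]
        simp [hpt]
      rw [hprod, hc, hl]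
      ring
    obtain ⟨d, hd⟩ := (MvPolynomial.ne_zero_iff.mp hf0)
    have := expsum' l f.support hlinj.injOn c hsum d (MvPolynomial.mem_support_iff.mpr hd)
    rw [hc] at this
    simp only [mul_eq_zero, pow_eq_zero_iff'] at this
    rcases this with (h | h) | h
    · exact hd h
    · exact ha h.1
    · exact hb h.1
  -- contradiction with Z ≠ univ
  apply hne
  rw [hS]
  ext y
  simp only [Set.mem_setOf_eq, Set.mem_univ, iff_true]
  intro f hf
  rw [hzero f hf]
  simp
end

section
/- Let N be a positive integer and let γ ∈ (ℂˣ)^N be such that for every nonzero vector v ∈ ℤ^N, the number ∏_i γ_i^{v_i} (integer exponents) is not a root of unity. Then the cyclic semigroup generated by γ is Zariski dense in the torus: every polynomial f in N variables over ℂ satisfying f(γ₁^n, …, γ_N^n) = 0 for all natural numbers n is the zero polynomial. -/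
/-!
Evaluating `f` at `(γ₁ⁿ, …, γ_Nⁿ)` gives the exponential sum `∑_d c_d (γ^d)ⁿ` over the monomials
`d` of `f`. The hypothesis makes the values `γ^d` of distinct monomials distinct, and sequences
`n ↦ zⁿ` with distinct `z` are linearly independent (Artin's independence of characters of
`ℕ`), so all coefficients `c_d` vanish.
-/

open Function

theorem linearIndependent_pow_of_injective {L ι : Type*} [CommRing L] [IsDomain L] {z : ι → L}
    (hz : Injective z) : LinearIndependent L fun i (n : ℕ) => z i ^ n := by
  have hchar := (linearIndependent_monoidHom (Multiplicative ℕ) L).comp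
    (fun i => powersHom L (z i)) ((powersHom L).injective.comp hz)
  exact hchar.map' (LinearEquiv.funCongrLeft L L Multiplicative.ofAdd).toLinearMap
    (LinearEquiv.ker _)

theorem injective_prod_pow_of_prod_zpow_ne_one {G ι : Type*} [CommGroup G] [Fintype ι]
    {γ : ι → G} (hγ : ∀ v : ι → ℤ, v ≠ 0 → ∏ i, γ i ^ v i ≠ 1) :
    Injective fun d : ι →₀ ℕ => ∏ i, γ i ^ d i := by
  intro d e hde
  by_contra hne
  refine hγ (fun i => (d i : ℤ) - e i) (fun h => hne ?_) ?_
  · ext i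
    exact_mod_cast sub_eq_zero.1 (congrFun h i)
  · simp only [zpow_sub, zpow_natCast, Finset.prod_mul_distrib, Finset.prod_inv_distrib]
    exact mul_inv_eq_one.2 hde

namespace MvPolynomial

theorem eval_pow_eq_sum {σ R : Type*} [Fintype σ] [CommSemiring R] (x : σ → R)
    (f : MvPolynomial σ R) (n : ℕ) :
    eval (fun i => x i ^ n) f = ∑ d ∈ f.support, f.coeff d * (∏ i, x i ^ d i) ^ n := by
  simp only [eval_eq', ← pow_mul, mul_comm n, ← Finset.prod_pow]

theorem eq_zero_of_eval_pow_eq_zero {σ L : Type*} [Fintype σ] [CommRing L] [IsDomain L]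
    {x : σ → L} (hx : Injective fun d : σ →₀ ℕ => ∏ i, x i ^ d i) {f : MvPolynomial σ L}
    (hf : ∀ n : ℕ, eval (fun i => x i ^ n) f = 0) : f = 0 := by
  have hsum : ∑ d ∈ f.support, f.coeff d • (fun n : ℕ => (∏ i, x i ^ d i) ^ n) = 0 := by
    ext n
    simpa only [Finset.sum_apply, Pi.smul_apply, smul_eq_mul, Pi.zero_apply, eval_pow_eq_sum]
      using hf n
  have hli := linearIndependent_pow_of_injective hx
  have hcoeff := linearIndependent_iff'.1 hli f.support (fun d => f.coeff d) hsum
  ext d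
  by_contra hd
  exact hd (hcoeff d (mem_support_iff.2 hd))

end MvPolynomial

theorem stmt_13_general (N : ℕ) (γ : Fin N → ℂˣ)
    (hγ : ∀ v : Fin N → ℤ, v ≠ 0 → ¬∃ k : ℕ, 0 < k ∧ (∏ i, γ i ^ v i) ^ k = 1)
    (f : MvPolynomial (Fin N) ℂ)
    (hf : ∀ n : ℕ, MvPolynomial.eval (fun i => (γ i : ℂ) ^ n) f = 0) :
    f = 0 := by
  refine MvPolynomial.eq_zero_of_eval_pow_eq_zero ?_ hf
  have hinj := injective_prod_pow_of_prod_zpow_ne_one fun v hv h1 => hγ v hv ⟨1, one_pos, by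
    rw [pow_one, h1]⟩
  intro d e hde
  apply hinj
  apply Units.val_injective
  simpa only [Units.coe_prod, Units.val_pow_eq_pow_val] using hde

/-- If no nontrivial integer character of the torus sends `γ ∈ (ℂˣ)^N` to a root of
unity, then the cyclic semigroup generated by `γ` is Zariski dense. -/
theorem stmt_13 (N : ℕ) (hN : 0 < N) (γ : Fin N → ℂˣ)
    (hγ : ∀ v : Fin N → ℤ, v ≠ 0 → ¬∃ k : ℕ, 0 < k ∧ (∏ i, γ i ^ v i) ^ k = 1)
    (f : MvPolynomial (Fin N) ℂ)
    (hf : ∀ n : ℕ, MvPolynomial.eval (fun i => (γ i : ℂ) ^ n) f = 0) :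
    f = 0 :=
  stmt_13_general N γ hγ f hf
end
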